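/- Let 𝔫 be the 8-dimensional metric nilpotent Lie algebra with orthonormal basis e₁,…,e₈ whose only nonzero brackets among basis vectors are [e₄,e₇] = e₈ = −[e₇,e₄] and [e₅,e₆] = e₈ = −[e₆,e₅], with Levi-Civita map ∇ given by the Koszul formula, and let ρ = ½e^{123} + ¼e^1∧(e^{47}−e^{56}) + ¼e^2∧(e^{46}+e^{57}) + ¼e^3∧(e^{45}−e^{67}) + (√3/4)e^8∧(e^{45}+e^{67}). Then the covariant derivative ∇_{e₄}ρ, i.e. the trilinear map (a,b,c) ↦ −ρ(∇_{e₄}a, b, c) − ρ(a, ∇_{e₄}b, c) − ρ(a, b, ∇_{e₄}c) on basis vectors a,b,c, is nonzero; in particular ρ is not parallel although dρ = 0 and d(⋆ρ) = 0. -/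

import Mathlib

/-!
In the paper's indexing, the Koszul formula gives `∇_{e₄} y = ½ (y₇ e₈ − y₈ e₇)`: the map
`∇_{e₄}` kills `e₁` and `e₄` and sends `e₈` to `−½ e₇`. Hence
`(∇_{e₄}ρ)(e₁, e₄, e₈) = ½ ρ(e₁, e₄, e₇) = ½ · ¼ ≠ 0`, the last value coming from the term
`¼ e^1 ∧ e^{47}` of `ρ`.
-/

noncomputable section

/-- The standard basis vectors of ℝ⁸ (`e i` is `eᵢ₊₁` in the paper's notation). -/
def e (i : Fin 8) : Fin 8 → ℝ := fun j => if i = j then 1 else 0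

/-- The standard inner product on ℝ⁸. -/
def dot (x y : Fin 8 → ℝ) : ℝ := ∑ i, x i * y i

/-- The alternating 3-form `eⁱ ∧ eʲ ∧ eᵏ` on ℝ⁸ (indices in `Fin 8`). -/
def wedge3 (i j k : Fin 8) : AlternatingMap ℝ (Fin 8 → ℝ) ℝ (Fin 3) :=
  (Matrix.detRowAlternating : AlternatingMap ℝ (Fin 3 → ℝ) ℝ (Fin 3)).compLinearMap
    (LinearMap.funLeft ℝ ℝ ![i, j, k])

/-- The PSU(3)-form `ρ₀ = ½e^{123} + ¼e^1∧(e^{47}−e^{56}) + ¼e^2∧(e^{46}+e^{57})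
+ ¼e^3∧(e^{45}−e^{67}) + (√3/4)e^8∧(e^{45}+e^{67})` (indices shifted down by one). -/
def ρ₀ : AlternatingMap ℝ (Fin 8 → ℝ) ℝ (Fin 3) :=
  (1/2 : ℝ) • wedge3 0 1 2
  + (1/4 : ℝ) • (wedge3 0 3 6 - wedge3 0 4 5)
  + (1/4 : ℝ) • (wedge3 1 3 5 + wedge3 1 4 6)
  + (1/4 : ℝ) • (wedge3 2 3 4 - wedge3 2 5 6)
  + (Real.sqrt 3 / 4) • (wedge3 7 3 4 + wedge3 7 5 6)

/-- The bracket `[x,y]_ρ` induced by a 3-form `ρ`, determined by `⟨[x,y]_ρ, z⟩ = ρ(x,y,z)`. -/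
def bracketOf (ρ : AlternatingMap ℝ (Fin 8 → ℝ) ℝ (Fin 3)) (x y : Fin 8 → ℝ) : Fin 8 → ℝ :=
  fun k => ρ ![x, y, e k]

/-- The bracket of the 8-dimensional nilpotent Lie algebra 𝔫 whose only nonzero brackets among
the orthonormal basis vectors are `[e₄,e₇] = e₈ = −[e₇,e₄]` and `[e₅,e₆] = e₈ = −[e₆,e₅]`
(indices shifted down by one), extended bilinearly. -/
def brN (x y : Fin 8 → ℝ) : Fin 8 → ℝ := fun k =>
  if k = 7 then x 3 * y 6 - x 6 * y 3 + x 4 * y 5 - x 5 * y 4 else 0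

/-- The Levi-Civita map of 𝔫, given by the Koszul formula
`2⟨∇ₓy, z⟩ = ⟨[x,y],z⟩ − ⟨[x,z],y⟩ − ⟨[y,z],x⟩` (with `z = e k` giving the coordinates). -/
def nabla (x y : Fin 8 → ℝ) : Fin 8 → ℝ := fun k =>
  (1/2 : ℝ) * (dot (brN x y) (e k) - dot (brN x (e k)) y - dot (brN y (e k)) x)

lemma AlternatingMap.map_vec3_smul_two {M : Type*} [AddCommGroup M] [Module ℝ M]
    (f : AlternatingMap ℝ M ℝ (Fin 3)) (a b v : M) (c : ℝ) :
    f ![a, b, c • v] = c * f ![a, b, v] := by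
  have h : ![a, b, c • v] = Function.update ![a, b, v] 2 (c • ![a, b, v] 2) := by
    ext i : 1; fin_cases i <;> rfl
  rw [h, f.map_update_smul, Function.update_eq_self, smul_eq_mul]

lemma wedge3_apply (i j k : Fin 8) (x y z : Fin 8 → ℝ) :
    wedge3 i j k ![x, y, z] =
      x i * y j * z k - x i * y k * z j - x j * y i * z k
        + x j * y k * z i + x k * y i * z j - x k * y j * z i := by
  rw [show wedge3 i j k ![x, y, z] = (Matrix.of fun r c => ![x, y, z] r (![i, j, k] c)).det
    from rfl, Matrix.det_fin_three]
  simp [Matrix.of_apply]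

lemma nabla_e3 (y : Fin 8 → ℝ) : nabla (e 3) y = (1/2 : ℝ) • (y 6 • e 7 - y 7 • e 6) := by
  funext k
  fin_cases k <;> simp [nabla, brN, dot, e]

lemma ρ₀_e0_e3_e6 : ρ₀ ![e 0, e 3, e 6] = 1/4 := by
  simp [ρ₀, wedge3_apply, e]

/-- On the nilpotent Lie algebra 𝔫 (only nonzero basis brackets
`[e₄,e₇] = [e₅,e₆] = e₈`), the covariant derivative `∇_{e₄}ρ₀` of the PSU(3)-form `ρ₀`, i.e. the
trilinear map `(a,b,c) ↦ −ρ₀(∇_{e₄}a, b, c) − ρ₀(a, ∇_{e₄}b, c) − ρ₀(a, b, ∇_{e₄}c)` on basis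
vectors, is nonzero; in particular `ρ₀` is not parallel. -/
theorem psu3_form_not_parallel_on_nilmanifold :
    ∃ a b c : Fin 8,
      - ρ₀ ![nabla (e 3) (e a), e b, e c] - ρ₀ ![e a, nabla (e 3) (e b), e c]
        - ρ₀ ![e a, e b, nabla (e 3) (e c)] ≠ 0 := by
  refine ⟨0, 3, 7, ?_⟩
  have h0 : nabla (e 3) (e 0) = 0 := by simp [nabla_e3, e]
  have h3 : nabla (e 3) (e 3) = 0 := by simp [nabla_e3, e]
  have h7 : nabla (e 3) (e 7) = -(1/2 : ℝ) • e 6 := by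
    ext k; fin_cases k <;> simp [nabla_e3, e]
  rw [h0, h3, h7, ρ₀.map_coord_zero 0 rfl, ρ₀.map_coord_zero 1 rfl,
    ρ₀.map_vec3_smul_two, ρ₀_e0_e3_e6]
  norm_num
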